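/- Let X be a geodesic Gromov-hyperbolic metric space and let B be a non-elementary subset of Isom(X). Then B is non-arithmetic if and only if ℓ_sub(B) ≠ ℓ(B). -/

import Mathlib

open MeasureTheory ProbabilityTheory Filter Topology Pointwise

noncomputable section

namespace BMS

/-- The Gromov product `(y,z)_x := (d(y,x) + d(z,x) - d(y,z))/2`. -/
def gp {X : Type*} [MetricSpace X] (x y z : X) : ℝ :=
  (dist y x + dist z x - dist y z) / 2

/-- `X` is `δ`-hyperbolic. -/
def HypWith (δ : ℝ) (X : Type*) [MetricSpace X] : Prop :=
  ∀ x₀ x₁ x₂ x₃ : X, min (gp x₀ x₃ x₁) (gp x₀ x₃ x₂) - δ ≤ gp x₀ x₁ x₂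

/-- `X` is Gromov-hyperbolic. -/
def GromovHyperbolic (X : Type*) [MetricSpace X] : Prop :=
  ∃ δ : ℝ, 0 < δ ∧ HypWith δ X

/-- `X` is a geodesic metric space: any two points are joined by an isometrically
parametrized path. -/
def GeodesicSpace (X : Type*) [MetricSpace X] : Prop :=
  ∀ x y : X, ∃ f : ℝ → X, f 0 = x ∧ f (dist x y) = y ∧
    ∀ s ∈ Set.Icc (0 : ℝ) (dist x y), ∀ t ∈ Set.Icc (0 : ℝ) (dist x y),
      dist (f s) (f t) = |s - t|

/-- The action of `Γ` on `X` is by isometries. -/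
def IsIsomAction (Γ X : Type*) [Group Γ] [MetricSpace X] [MulAction Γ X] : Prop :=
  ∀ (g : Γ) (x y : X), dist (g • x) (g • y) = dist x y

/-- The positions of the random walk: `walk ω n = ω 1 * ⋯ * ω n`. -/
def walk {Γ Ω : Type*} [Group Γ] (ω : ℕ → Ω → Γ) : ℕ → Ω → Γ
  | 0 => fun _ => 1
  | n + 1 => fun ρ => walk ω n ρ * ω (n + 1) ρ

/-- Extended-real valued logarithm of an extended nonnegative real, with `elog 0 = ⊥`. -/
def elog (x : ENNReal) : EReal :=
  if x = 0 then ⊥ else ((Real.log x.toReal : ℝ) : EReal)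

/-- `(1/n)·log P(Z n ∈ R)`, as an extended real number. -/
def logProbRate {Ω : Type*} [MeasurableSpace Ω] (P : Measure Ω) (Z : ℕ → Ω → ℝ)
    (R : Set ℝ) (n : ℕ) : EReal :=
  (((n : ℝ)⁻¹ : ℝ) : EReal) * elog (P {ρ | Z n ρ ∈ R})

/-- The sequence of real random variables `Z n` satisfies a (full) large deviation
principle under `P` with rate function `I`. -/
def HasLDP {Ω : Type*} [MeasurableSpace Ω] (P : Measure Ω) (Z : ℕ → Ω → ℝ)
    (I : ℝ → ENNReal) : Prop :=
  LowerSemicontinuous I ∧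
  ∀ R : Set ℝ, MeasurableSet R →
    (-(⨅ α ∈ interior R, ((I α : EReal))) ≤ liminf (logProbRate P Z R) atTop ∧
      limsup (logProbRate P Z R) atTop ≤ -(⨅ α ∈ closure R, ((I α : EReal))))

/-- Weak large deviation principle: the lower bound holds for all measurable sets and
the upper bound for bounded measurable sets. -/
def HasWeakLDP {Ω : Type*} [MeasurableSpace Ω] (P : Measure Ω) (Z : ℕ → Ω → ℝ)
    (I : ℝ → ENNReal) : Prop :=
  LowerSemicontinuous I ∧
  ∀ R : Set ℝ, MeasurableSet R →
    (-(⨅ α ∈ interior R, ((I α : EReal))) ≤ liminf (logProbRate P Z R) atTop ∧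
      (Bornology.IsBounded R →
        limsup (logProbRate P Z R) atTop ≤ -(⨅ α ∈ closure R, ((I α : EReal)))))

/-- Convexity of an `[0,∞]`-valued function on `ℝ`. -/
def ConvexRate (I : ℝ → ENNReal) : Prop :=
  ∀ x y t : ℝ, 0 ≤ t → t ≤ 1 →
    I (t * x + (1 - t) * y) ≤ ENNReal.ofReal t * I x + ENNReal.ofReal (1 - t) * I y

/-- A rate function is proper if its sublevel sets are compact. -/
def ProperRate (I : ℝ → ENNReal) : Prop :=
  ∀ c : ENNReal, c ≠ ⊤ → IsCompact {x : ℝ | I x ≤ c}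

/-- The support of a measure on a countable discrete space. -/
def measSupport {Γ : Type*} [MeasurableSpace Γ] (μ : Measure Γ) : Set Γ :=
  {g | μ {g} ≠ 0}

/-- `S` is a Schottky set with respect to the basepoint `z0`. -/
def IsSchottky {Γ X : Type*} [Group Γ] [MetricSpace X] [MulAction Γ X]
    (z0 : X) (S : Set Γ) : Prop :=
  S.Finite ∧ S.Nonempty ∧ ∃ C : ℝ, 0 < C ∧ ∀ y z : X,
    (2 / 3 : ℝ) * (S.ncard : ℝ) ≤ (({s ∈ S | gp z0 y (s • z) ≤ C} : Set Γ).ncard : ℝ)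

/-- `u : ℤ → X` is a quasi-geodesic. -/
def QuasiGeodZ {X : Type*} [MetricSpace X] (u : ℤ → X) : Prop :=
  ∃ lam C : ℝ, 1 ≤ lam ∧ 0 ≤ C ∧ ∀ m n : ℤ,
    lam⁻¹ * |(m : ℝ) - (n : ℝ)| - C ≤ dist (u m) (u n) ∧
      dist (u m) (u n) ≤ lam * |(m : ℝ) - (n : ℝ)| + C

/-- `g` is a loxodromic isometry: some (equivalently, any) orbit map `n ↦ g^n • x`
is a quasi-geodesic. -/
def IsLoxodromic (X : Type*) {Γ : Type*} [MetricSpace X] [Group Γ] [MulAction Γ X]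
    (g : Γ) : Prop :=
  ∃ x : X, QuasiGeodZ (fun n : ℤ => (g ^ n) • x)

/-- The forward (`s = true`) or backward (`s = false`) orbit ray of `g` from `z0`. -/
def raySeq {Γ X : Type*} [Group Γ] [MetricSpace X] [MulAction Γ X]
    (z0 : X) (g : Γ) (s : Bool) : ℕ → X :=
  fun n => (g ^ (if s then (n : ℤ) else -(n : ℤ))) • z0

/-- Two sequences define the same point of the Gromov boundary. -/
def SameEnd {X : Type*} [MetricSpace X] (z0 : X) (u v : ℕ → X) : Prop :=
  Tendsto (fun n => gp z0 (u n) (v n)) atTop atTop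

/-- `g` and `h` are independent loxodromic elements: both are loxodromic and their
four boundary fixed points are pairwise distinct. -/
def IndepLox {Γ X : Type*} [Group Γ] [MetricSpace X] [MulAction Γ X]
    (z0 : X) (g h : Γ) : Prop :=
  IsLoxodromic X g ∧ IsLoxodromic X h ∧
  (¬ SameEnd z0 (raySeq z0 g true) (raySeq z0 g false)) ∧
  (¬ SameEnd z0 (raySeq z0 h true) (raySeq z0 h false)) ∧
  (∀ s t : Bool, ¬ SameEnd z0 (raySeq z0 g s) (raySeq z0 h t))

/-- A set `B` of isometries is non-elementary: the subsemigroup it generates contains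
two independent loxodromic elements. -/
def NonElementarySet {Γ X : Type*} [Group Γ] [MetricSpace X] [MulAction Γ X]
    (z0 : X) (B : Set Γ) : Prop :=
  ∃ g h : Γ, g ∈ Subsemigroup.closure B ∧ h ∈ Subsemigroup.closure B ∧ IndepLox z0 g h

/-- A probability measure is non-elementary if its support is. -/
def NonElementary {Γ X : Type*} [Group Γ] [MeasurableSpace Γ] [MetricSpace X] [MulAction Γ X]
    (z0 : X) (μ : Measure Γ) : Prop :=
  NonElementarySet z0 (measSupport μ)

/-- The translation length `τ(g) := inf_x d(x, g•x)`. -/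
def translationLength (X : Type*) {Γ : Type*} [MetricSpace X] [Group Γ] [MulAction Γ X]
    (g : Γ) : ℝ :=
  ⨅ x : X, dist x (g • x)

/-- The asymptotic (stable) translation length `ℓ(g) = lim_n d(g^n • z0, z0)/n`;
by Fekete's subadditivity lemma the limit equals the infimum over `n ≥ 1`. -/
def stableLength {Γ X : Type*} [Group Γ] [MetricSpace X] [MulAction Γ X]
    (z0 : X) (g : Γ) : ℝ :=
  ⨅ n : ℕ, dist ((g ^ (n + 1)) • z0) z0 / (n + 1)

/-- `B` is non-arithmetic: some power `B^n` contains two elements with different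
asymptotic translation lengths. -/
def NonArithmetic {Γ X : Type*} [Group Γ] [MetricSpace X] [MulAction Γ X]
    (z0 : X) (B : Set Γ) : Prop :=
  ∃ (n : ℕ) (g₁ g₂ : Γ), g₁ ∈ B ^ n ∧ g₂ ∈ B ^ n ∧
    stableLength z0 g₁ ≠ stableLength z0 g₂

/-- `sup_{g ∈ B^n} d(g•z0, z0)`, valued in `[0,∞]`. -/
def dispSup {Γ X : Type*} [Group Γ] [MetricSpace X] [MulAction Γ X]
    (z0 : X) (B : Set Γ) (n : ℕ) : ENNReal :=
  ⨆ g ∈ B ^ n, ENNReal.ofReal (dist (g • z0) z0)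

/-- `inf_{g ∈ B^n} d(g•z0, z0)`, valued in `[0,∞]`. -/
def dispInf {Γ X : Type*} [Group Γ] [MetricSpace X] [MulAction Γ X]
    (z0 : X) (B : Set Γ) (n : ℕ) : ENNReal :=
  ⨅ g ∈ B ^ n, ENNReal.ofReal (dist (g • z0) z0)

/-- `μ` has a finite exponential moment:
`E[exp (λ·d(z0, ω 1 • z0))] < ∞` for some `λ > 0`. -/
def FiniteExpMoment {Γ Ω X : Type*} [Group Γ] [MetricSpace X] [MulAction Γ X]
    [MeasurableSpace Ω] (P : Measure Ω) (ω : ℕ → Ω → Γ) (z0 : X) : Prop :=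
  ∃ lam : ℝ, 0 < lam ∧
    Integrable (fun ρ => Real.exp (lam * dist ((ω 1 ρ) • z0) z0)) P

/-- The increments `ω i` are i.i.d. with common law `μ`. -/
def IIDWalk {Γ Ω : Type*} [Group Γ] [MeasurableSpace Γ] [MeasurableSpace Ω]
    (P : Measure Ω) (ω : ℕ → Ω → Γ) (μ : Measure Γ) : Prop :=
  (∀ i, Measurable (ω i)) ∧
  iIndepFun ω P ∧
  ∀ i, P.map (ω i) = μ

/-- `-(1/n)·log P(d(z_n, z0) ≤ a·n)`. -/
def belowRate {Γ Ω X : Type*} [Group Γ] [MetricSpace X] [MulAction Γ X]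
    [MeasurableSpace Ω] (P : Measure Ω) (ω : ℕ → Ω → Γ) (z0 : X) (a : ℝ) (n : ℕ) : EReal :=
  -((((n : ℝ)⁻¹ : ℝ) : EReal) * elog (P {ρ | dist ((walk ω n ρ) • z0) z0 ≤ a * n}))

/-- `-(1/n)·log P(d(z_n, z0) ≥ a·n)`. -/
def aboveRate {Γ Ω X : Type*} [Group Γ] [MetricSpace X] [MulAction Γ X]
    [MeasurableSpace Ω] (P : Measure Ω) (ω : ℕ → Ω → Γ) (z0 : X) (a : ℝ) (n : ℕ) : EReal :=
  -((((n : ℝ)⁻¹ : ℝ) : EReal) * elog (P {ρ | a * n ≤ dist ((walk ω n ρ) • z0) z0}))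

end BMS
/-!
If `B` is non-arithmetic, pick `g₁, g₂ ∈ B ^ m` with `ℓ(g₁) < ℓ(g₂)`; since `gᵢ ^ k ∈ B ^ (m k)`,
`ℓ_sub(B) ≤ ℓ(g₁) / m < ℓ(g₂) / m ≤ ℓ(B)`.

If `B` is arithmetic, every element of `B ^ n` has stable length `n λ`, and `ℓ(g) ≤ d(g z0, z0)`
gives `ℓ_sub(B) ≥ λ`. For `ℓ(B) ≤ λ` one bounds `d(g z0, z0) ≤ n λ + C` on `B ^ n` by ping-pong.
The basic tool is local-to-global: a chain of points whose consecutive Gromov products are at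
most `A` and whose steps exceed `2 A + 3 δ` is a quasi-geodesic in a `δ`-hyperbolic space
(`IsStraightChain`). Suitable powers `F`, `H` of the two independent loxodromics have straight
orbits, and for large `N` the set `{F ^ N, H ^ N}` plays ping-pong: for every `g` one of the four
products `s` is such that `g⁻¹ z0, s z0` and `s⁻¹ z0, g z0` diverge early. The orbit of `g s` is
then a straight chain, so `ℓ(g s) ≥ d(g z0, z0) + d(s z0, z0) - 4 (C + δ)`.
-/

namespace BMS

section GromovProduct

variable {X : Type*} [MetricSpace X]

lemma gp_comm (x y z : X) : gp x y z = gp x z y := by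
  unfold gp; rw [dist_comm y z]; ring

lemma gp_nonneg (x y z : X) : 0 ≤ gp x y z := by
  have := dist_triangle y x z
  unfold gp; rw [dist_comm x z] at this; linarith

lemma gp_le_dist_left (x y z : X) : gp x y z ≤ dist y x := by
  have := dist_triangle z y x
  unfold gp; rw [dist_comm z y] at this; linarith

lemma gp_self_left (x y : X) : gp x x y = 0 := by
  unfold gp; rw [dist_self, dist_comm y x]; ring

lemma gp_add_gp (x y z : X) : gp x y z + gp y x z = dist x y := by
  unfold gp; rw [dist_comm x y, dist_comm z y, dist_comm x z]; ring

lemma gp_le_gp_add_dist (x y z z' : X) : gp x y z ≤ gp x y z' + dist z z' := by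
  have := dist_triangle y z z'
  have := dist_triangle z z' x
  unfold gp; linarith

lemma HypWith.gp_le_of_lt_gp {δ R : ℝ} (hyp : HypWith δ X) {x a b w : X}
    (hab : gp x a b ≤ R) (hwa : R + δ < gp x w a) : gp x w b ≤ R + δ := by
  by_contra! hwb
  have := hyp x a b w
  have := lt_min hwa hwb
  linarith

lemma HypWith.gp_le_or_gp_le {δ W : ℝ} (hyp : HypWith δ X) {x a b : X}
    (hab : gp x a b ≤ W) (y : X) : gp x y a ≤ W + δ ∨ gp x y b ≤ W + δ := by
  rw [← min_le_iff]
  linarith [hyp x a b y]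

end GromovProduct

section IsometricAction

variable {X : Type*} [MetricSpace X] {Γ : Type*} [Group Γ] [MulAction Γ X]

lemma gp_smul (hiso : IsIsomAction Γ X) (g : Γ) (x y z : X) :
    gp (g • x) (g • y) (g • z) = gp x y z := by
  unfold gp; rw [hiso, hiso, hiso]

lemma dist_mul_smul_le (hiso : IsIsomAction Γ X) (g h : Γ) (z : X) :
    dist ((g * h) • z) z ≤ dist (g • z) z + dist (h • z) z := by
  calc dist ((g * h) • z) z ≤ dist (g • h • z) (g • z) + dist (g • z) z := by
        rw [mul_smul]; exact dist_triangle _ _ _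
    _ = dist (g • z) z + dist (h • z) z := by rw [hiso, add_comm]

lemma dist_inv_smul (hiso : IsIsomAction Γ X) (g : Γ) (z : X) :
    dist (g⁻¹ • z) z = dist (g • z) z := by
  rw [← hiso g, smul_inv_smul, dist_comm]

lemma dist_pow_smul_le (hiso : IsIsomAction Γ X) (g : Γ) (z : X) (n : ℕ) :
    dist ((g ^ n) • z) z ≤ n * dist (g • z) z := by
  induction n with
  | zero => simp
  | succ n ih =>
    have := dist_mul_smul_le hiso (g ^ n) g z
    rw [← pow_succ] at this
    push_cast; linarith

lemma subadditive_dist_pow_smul (hiso : IsIsomAction Γ X) (g : Γ) (z : X) :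
    Subadditive (fun n => dist ((g ^ n) • z) z) := fun m n => by
  simpa only [pow_add] using dist_mul_smul_le hiso (g ^ m) (g ^ n) z

lemma dist_sub_le_gp_mul_smul (hiso : IsIsomAction Γ X) (z : X) (u v : Γ) :
    dist (u • z) z - gp z (u⁻¹ • z) (v • z) ≤ gp z ((u * v) • z) (u • z) := by
  have key := gp_add_gp z (u • z) ((u * v) • z)
  have : gp (u • z) z ((u * v) • z) = gp z (u⁻¹ • z) (v • z) := by
    rw [← gp_smul hiso u⁻¹, inv_smul_smul, ← mul_smul, inv_mul_cancel_left]
  rw [this, dist_comm] at key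
  rw [gp_comm z ((u * v) • z)]
  linarith

end IsometricAction

section StableLength

variable {X : Type*} [MetricSpace X] {Γ : Type*} [Group Γ] [MulAction Γ X]

lemma stableLength_nonneg (z0 : X) (g : Γ) : 0 ≤ stableLength z0 g :=
  le_ciInf fun _ => by positivity

lemma stableLength_le_div (z0 : X) (g : Γ) (n : ℕ) :
    stableLength z0 g ≤ dist ((g ^ (n + 1)) • z0) z0 / (n + 1) :=
  ciInf_le ⟨0, by rintro _ ⟨m, rfl⟩; positivity⟩ n

lemma mul_stableLength_le (z0 : X) (g : Γ) (n : ℕ) :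
    n * stableLength z0 g ≤ dist ((g ^ n) • z0) z0 := by
  cases n with
  | zero => simp
  | succ n =>
    have := stableLength_le_div z0 g n
    rw [le_div_iff₀ (by positivity)] at this
    push_cast; linarith

lemma stableLength_le_dist (z0 : X) (g : Γ) : stableLength z0 g ≤ dist (g • z0) z0 := by
  simpa using mul_stableLength_le z0 g 1

lemma tendsto_stableLength (hiso : IsIsomAction Γ X) (z0 : X) (g : Γ) :
    Tendsto (fun n : ℕ => dist ((g ^ n) • z0) z0 / n) atTop (𝓝 (stableLength z0 g)) := by
  have hsub := subadditive_dist_pow_smul hiso g z0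
  have hbdd : BddBelow (Set.range fun n : ℕ => dist ((g ^ n) • z0) z0 / n) :=
    ⟨0, by rintro _ ⟨n, rfl⟩; positivity⟩
  convert hsub.tendsto_lim hbdd using 2
  refine le_antisymm ?_ (le_ciInf fun n => ?_)
  · refine ge_of_tendsto (hsub.tendsto_lim hbdd) (eventually_ge_atTop 1 |>.mono fun n hn => ?_)
    rw [le_div_iff₀ (by exact_mod_cast hn)]
    exact mul_comm (n : ℝ) _ ▸ mul_stableLength_le z0 g n
  · exact_mod_cast hsub.lim_le_div hbdd n.succ_ne_zero

lemma stableLength_pow (hiso : IsIsomAction Γ X) (z0 : X) (g : Γ) (k : ℕ) :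
    stableLength z0 (g ^ k) = k * stableLength z0 g := by
  rcases Nat.eq_zero_or_pos k with rfl | hk
  · simp [stableLength]
  have hmul : Tendsto (fun n : ℕ => k * n) atTop atTop :=
    tendsto_id.const_mul_atTop' hk
  refine tendsto_nhds_unique (tendsto_stableLength hiso z0 (g ^ k)) ?_
  refine (((tendsto_stableLength hiso z0 g).comp hmul).const_mul (k : ℝ)).congr' ?_
  filter_upwards [eventually_ne_atTop 0] with n hn
  simp only [Function.comp, ← pow_mul, Nat.cast_mul]
  field_simp

lemma le_stableLength_of_le_dist (z0 : X) (g : Γ) {c : ℝ}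
    (h : ∀ n : ℕ, c * n ≤ dist ((g ^ n) • z0) z0) : c ≤ stableLength z0 g :=
  le_ciInf fun n => (le_div_iff₀ (by positivity)).2 (by exact_mod_cast h (n + 1))

lemma IsLoxodromic.tendsto_dist_pow_smul (hiso : IsIsomAction Γ X) (z0 : X) {f : Γ}
    (hf : IsLoxodromic X f) : Tendsto (fun n : ℕ => dist ((f ^ n) • z0) z0) atTop atTop := by
  obtain ⟨x, lam, C, hlam, -, hq⟩ := hf
  have hlower : ∀ n : ℕ, lam⁻¹ * n - (C + 2 * dist z0 x) ≤ dist ((f ^ n) • z0) z0 := by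
    intro n
    have h1 := (hq n 0).1
    simp only [zpow_natCast, zpow_zero, one_smul, Int.cast_natCast, Int.cast_zero, sub_zero,
      Nat.abs_cast] at h1
    have := dist_triangle4 ((f ^ n) • x) ((f ^ n) • z0) z0 x
    rw [hiso, dist_comm x z0] at this
    linarith
  refine tendsto_atTop_mono hlower (tendsto_atTop_add_const_right _ _ ?_)
  exact tendsto_natCast_atTop_atTop.const_mul_atTop (by positivity)

end StableLength

section StraightChain

variable {X : Type*} [MetricSpace X] {δ A : ℝ}

lemma HypWith.nonneg (hyp : HypWith δ X) (x : X) : 0 ≤ δ := by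
  simpa [gp_self_left] using hyp x x x x

structure IsStraightChain (δ A : ℝ) (x : ℕ → X) (N : ℕ) : Prop where
  gp_le : ∀ i, i + 2 ≤ N → gp (x (i + 1)) (x i) (x (i + 2)) ≤ A
  le_dist : ∀ i, i + 1 ≤ N → 2 * A + 3 * δ + 1 ≤ dist (x i) (x (i + 1))

namespace IsStraightChain

variable {x : ℕ → X} {N : ℕ}

lemma reverse (hx : IsStraightChain δ A x N) : IsStraightChain δ A (fun j => x (N - j)) N where
  gp_le j hj := by
    have := hx.gp_le (N - (j + 2)) (by omega)
    rwa [show N - (j + 2) + 1 = N - (j + 1) by omega, show N - (j + 2) + 2 = N - j by omega,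
      gp_comm] at this
  le_dist j hj := by
    have := hx.le_dist (N - (j + 1)) (by omega)
    rwa [show N - (j + 1) + 1 = N - j by omega, dist_comm] at this

lemma gp_zero_succ_le (hyp : HypWith δ X) (hx : IsStraightChain δ A x N) :
    ∀ n, 1 ≤ n → n + 1 ≤ N → gp (x n) (x 0) (x (n + 1)) ≤ A + δ := by
  have hδ := hyp.nonneg (x 0)
  intro n hn hnN
  induction n with
  | zero => omega
  | succ m ih =>
    rcases Nat.eq_zero_or_pos m with rfl | hm
    · linarith [hx.gp_le 0 (by omega)]
    have hsplit := gp_add_gp (x m) (x (m + 1)) (x 0)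
    rw [gp_comm (x m)] at hsplit
    have hfar : A + δ < gp (x (m + 1)) (x 0) (x m) := by
      rw [gp_comm]
      linarith [ih hm (by omega), hx.le_dist m (by omega)]
    exact hyp.gp_le_of_lt_gp (hx.gp_le m (by omega)) hfar

lemma sum_sub_le_dist (hyp : HypWith δ X) (hx : IsStraightChain δ A x N) (hA : 0 ≤ A) :
    ∀ n, n ≤ N →
      ∑ i ∈ Finset.range n, dist (x i) (x (i + 1)) - 2 * n * (A + δ) ≤ dist (x 0) (x n) := by
  have hδ := hyp.nonneg (x 0)
  intro n hn
  induction n with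
  | zero => simp
  | succ m ih =>
    rw [Finset.sum_range_succ]
    rcases Nat.eq_zero_or_pos m with rfl | hm
    · simp only [Finset.range_zero, Finset.sum_empty, zero_add, Nat.cast_one]
      linarith
    have hsplit : dist (x 0) (x (m + 1)) =
        dist (x 0) (x m) + dist (x m) (x (m + 1)) - 2 * gp (x m) (x 0) (x (m + 1)) := by
      unfold gp; rw [dist_comm (x (m + 1)) (x m)]; ring
    have := hx.gp_zero_succ_le hyp m hm hn
    push_cast
    linarith [ih (by omega)]

lemma gp_zero_last_le (hyp : HypWith δ X) (hx : IsStraightChain δ A x N) (hA : 0 ≤ A)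
    (i : ℕ) (hi : i ≤ N) : gp (x i) (x 0) (x N) ≤ A + 2 * δ := by
  have hδ := hyp.nonneg (x 0)
  rcases Nat.eq_zero_or_pos i with rfl | hi0
  · rw [gp_self_left]; linarith
  rcases hi.eq_or_lt with rfl | hiN
  · rw [gp_comm, gp_self_left]; linarith
  have hback : gp (x i) (x (i + 1)) (x 0) ≤ A + δ := by
    rw [gp_comm]; exact hx.gp_zero_succ_le hyp i hi0 hiN
  have hfwd : gp (x (i + 1)) (x N) (x i) ≤ A + δ := by
    rcases (show i + 1 ≤ N from hiN).eq_or_lt with hN | hN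
    · rw [← hN, gp_self_left]; linarith
    have := hx.reverse.gp_zero_succ_le hyp (N - (i + 1)) (by omega) (by omega)
    simpa only [Nat.sub_zero, show N - (N - (i + 1)) = i + 1 by omega,
      show N - (N - (i + 1) + 1) = i by omega] using this
  have hsplit := gp_add_gp (x i) (x (i + 1)) (x N)
  rw [gp_comm (x (i + 1)) (x i)] at hsplit
  have hfar : A + δ + δ < gp (x i) (x N) (x (i + 1)) := by
    rw [gp_comm]; linarith [hx.le_dist i hiN]
  rw [gp_comm]
  linarith [hyp.gp_le_of_lt_gp hback hfar]

end IsStraightChain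

end StraightChain

section OrbitChain

variable {X : Type*} [MetricSpace X] {Γ : Type*} [Group Γ] [MulAction Γ X] {δ A : ℝ}

def prefixProd (w : ℕ → Γ) : ℕ → Γ
  | 0 => 1
  | i + 1 => prefixProd w i * w i

lemma dist_orbit_succ (hiso : IsIsomAction Γ X) (z0 : X) (c : Γ) (w : ℕ → Γ) (i : ℕ) :
    dist ((c * prefixProd w i) • z0) ((c * prefixProd w (i + 1)) • z0) = dist (w i • z0) z0 := by
  rw [prefixProd, ← mul_assoc, mul_smul _ (w i), hiso, dist_comm]

lemma isStraightChain_orbit (hiso : IsIsomAction Γ X) (z0 : X) (c : Γ) (w : ℕ → Γ)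
    (hgp : ∀ i, gp z0 ((w i)⁻¹ • z0) (w (i + 1) • z0) ≤ A)
    (hdist : ∀ i, 2 * A + 3 * δ + 1 ≤ dist (w i • z0) z0) (N : ℕ) :
    IsStraightChain δ A (fun i => (c * prefixProd w i) • z0) N where
  gp_le i _ := by
    have hprev : (c * prefixProd w i) • z0 = (c * prefixProd w (i + 1)) • (w i)⁻¹ • z0 := by
      simp [prefixProd, smul_smul, mul_assoc]
    have hnext : (c * prefixProd w (i + 2)) • z0 = (c * prefixProd w (i + 1)) • w (i + 1) • z0 := by
      simp [prefixProd, smul_smul, mul_assoc]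
    rw [hprev, hnext, gp_smul hiso]
    exact hgp i
  le_dist i _ := dist_orbit_succ hiso z0 c w i ▸ hdist i

lemma prefixProd_const (g : Γ) (n : ℕ) : prefixProd (fun _ => g) n = g ^ n := by
  induction n with
  | zero => rw [prefixProd, pow_zero]
  | succ n ih => rw [prefixProd, ih, pow_succ]

structure IsStraight (δ A : ℝ) (z0 : X) (F : Γ) : Prop where
  gp_inv_le : gp z0 (F⁻¹ • z0) (F • z0) ≤ A
  le_dist : 2 * A + 3 * δ + 1 ≤ dist (F • z0) z0

lemma IsStraight.nonneg {z0 : X} {F : Γ} (hF : IsStraight δ A z0 F) : 0 ≤ A :=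
  (gp_nonneg _ _ _).trans hF.gp_inv_le

lemma IsStraight.inv (hiso : IsIsomAction Γ X) {z0 : X} {F : Γ} (hF : IsStraight δ A z0 F) :
    IsStraight δ A z0 F⁻¹ where
  gp_inv_le := by rw [inv_inv, gp_comm]; exact hF.gp_inv_le
  le_dist := by rw [dist_inv_smul hiso]; exact hF.le_dist

lemma IsStraight.isStraightChain (hiso : IsIsomAction Γ X) {z0 : X} {F : Γ}
    (hF : IsStraight δ A z0 F) (c : Γ) (N : ℕ) :
    IsStraightChain δ A (fun j => (c * F ^ j) • z0) N := by
  simpa only [prefixProd_const] using isStraightChain_orbit hiso z0 c (fun _ => F)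
    (fun _ => hF.gp_inv_le) (fun _ => hF.le_dist) N

lemma sum_range_two_mul_ite_even (a b : ℝ) (k : ℕ) :
    ∑ i ∈ Finset.range (2 * k), (if Even i then a else b) = k * (a + b) := by
  induction k with
  | zero => simp
  | succ k ih =>
    rw [show 2 * (k + 1) = 2 * k + 1 + 1 by ring, Finset.sum_range_succ, Finset.sum_range_succ, ih,
      if_pos (even_two_mul k), if_neg (Nat.not_even_iff_odd.mpr (odd_two_mul_add_one k))]
    push_cast; ring

/-- The partial products of the word `g s g s ⋯` move `z0` along a straight chain. -/
lemma add_sub_le_stableLength_mul (hiso : IsIsomAction Γ X) (hyp : HypWith δ X) (z0 : X)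
    {g s : Γ} (hgs : gp z0 (g⁻¹ • z0) (s • z0) ≤ A) (hsg : gp z0 (s⁻¹ • z0) (g • z0) ≤ A)
    (hg : 2 * A + 3 * δ + 1 ≤ dist (g • z0) z0) (hs : 2 * A + 3 * δ + 1 ≤ dist (s • z0) z0) :
    dist (g • z0) z0 + dist (s • z0) z0 - 4 * (A + δ) ≤ stableLength z0 (g * s) := by
  set w : ℕ → Γ := fun i => if Even i then g else s
  have hword : ∀ k, prefixProd w (2 * k) = (g * s) ^ k := by
    intro k
    induction k with
    | zero => rw [mul_zero, prefixProd, pow_zero]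
    | succ k ih =>
      rw [show 2 * (k + 1) = 2 * k + 1 + 1 by ring, prefixProd, prefixProd, ih, pow_succ,
        mul_assoc]
      simp [w]
  have hchain := isStraightChain_orbit (δ := δ) (A := A) hiso z0 1 w
    (fun i => by by_cases hi : Even i <;> simpa [w, hi, Nat.even_add_one])
    (fun i => by by_cases hi : Even i <;> simpa [w, hi])
  refine le_stableLength_of_le_dist z0 _ fun k => ?_
  have := (hchain (2 * k)).sum_sub_le_dist hyp ((gp_nonneg _ _ _).trans hgs) (2 * k) le_rfl
  have hsum : ∑ i ∈ Finset.range (2 * k), dist ((1 * prefixProd w i) • z0)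
      ((1 * prefixProd w (i + 1)) • z0) = k * (dist (g • z0) z0 + dist (s • z0) z0) := by
    simp only [dist_orbit_succ hiso, w, apply_ite (fun t : Γ => dist (t • z0) z0)]
    exact sum_range_two_mul_ite_even _ _ k
  rw [hsum, one_mul, hword, prefixProd, one_mul, one_smul, dist_comm z0] at this
  push_cast at this
  linarith

lemma IsStraight.gp_inv_pow_smul_pow_smul_le (hiso : IsIsomAction Γ X) (hyp : HypWith δ X)
    {z0 : X} {F : Γ} (hF : IsStraight δ A z0 F) (a b : ℕ) :
    gp z0 ((F⁻¹ ^ a) • z0) ((F ^ b) • z0) ≤ A + 2 * δ := by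
  have := (hF.isStraightChain hiso (F⁻¹ ^ a) (a + b)).gp_zero_last_le hyp hF.nonneg a (by omega)
  simpa only [inv_pow, inv_mul_cancel, one_smul, pow_zero, mul_one, pow_add,
    inv_mul_cancel_left] using this

lemma IsStraight.sub_le_gp_pow_smul_pow_smul (hiso : IsIsomAction Γ X) (hyp : HypWith δ X)
    {z0 : X} {F : Γ} (hF : IsStraight δ A z0 F) {a b : ℕ} (hab : a ≤ b) :
    a * (dist (F • z0) z0 - 2 * (A + δ)) - (A + 2 * δ) ≤ gp z0 ((F ^ a) • z0) ((F ^ b) • z0) := by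
  have hchain := hF.isStraightChain hiso 1 b
  have hgpa := hchain.gp_zero_last_le hyp hF.nonneg a hab
  have hdista := hchain.sum_sub_le_dist hyp hF.nonneg a hab
  have hsplit := gp_add_gp z0 ((F ^ a) • z0) ((F ^ b) • z0)
  have hstep : ∀ i, dist ((1 * F ^ i) • z0) ((1 * F ^ (i + 1)) • z0) = dist (F • z0) z0 :=
    fun i => by rw [pow_succ, ← mul_assoc, mul_smul _ F, hiso, dist_comm]
  rw [Finset.sum_congr rfl fun i _ => hstep i, Finset.sum_const, Finset.card_range,
    nsmul_eq_mul] at hdista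
  simp only [one_mul, pow_zero, one_smul] at hgpa hdista
  linarith

end OrbitChain

section Directions

variable {X : Type*} [MetricSpace X] {Γ : Type*} [Group Γ] [MulAction Γ X] {δ A M : ℝ}

lemma HypWith.gp_le_of_frequently (hyp : HypWith δ X) {x a b : X} {u v : ℕ → X}
    (hfreq : ∃ᶠ n in atTop, gp x (u n) (v n) ≤ M)
    (ha : ∀ᶠ n in atTop, M + 2 * δ < gp x a (u n)) (hb : ∀ᶠ n in atTop, M + 2 * δ < gp x b (v n)) :
    gp x a b ≤ M + 2 * δ := by
  have hδ := hyp.nonneg x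
  obtain ⟨n, ⟨han, hbn⟩, hn⟩ := ((ha.and hb).and_frequently hfreq).exists
  have hav : gp x a (v n) ≤ M + δ := hyp.gp_le_of_lt_gp hn (by linarith)
  have hba : gp x b a ≤ M + δ + δ := hyp.gp_le_of_lt_gp (by rwa [gp_comm]) (by linarith)
  rw [gp_comm]; linarith

/-- `f ^ n • z0` lies within `p * d(f • z0, z0)` of the straight chain point
`(f ^ p) ^ (n / p) • z0`. -/
lemma IsStraight.eventually_lt_gp (hiso : IsIsomAction Γ X) (hyp : HypWith δ X) {z0 : X}
    {f : Γ} {p : ℕ} (hp : 0 < p) (hF : IsStraight δ A z0 (f ^ p)) (T : ℝ) :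
    ∀ᶠ a in atTop, ∀ᶠ n in atTop, T < gp z0 (((f ^ p) ^ a) • z0) ((f ^ n) • z0) := by
  have hδ := hyp.nonneg z0
  have hclose : ∀ n, dist (((f ^ p) ^ (n / p)) • z0) ((f ^ n) • z0) ≤ p * dist (f • z0) z0 := by
    intro n
    have hsplit : f ^ n = (f ^ p) ^ (n / p) * f ^ (n % p) := by
      rw [← pow_mul, ← pow_add, Nat.div_add_mod]
    rw [hsplit, mul_smul, hiso, dist_comm]
    exact (dist_pow_smul_le hiso f z0 _).trans (by gcongr; exact (Nat.mod_lt n hp).le)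
  have hlin : Tendsto (fun a : ℕ => a * (dist ((f ^ p) • z0) z0 - 2 * (A + δ)) - (A + 2 * δ)
      - p * dist (f • z0) z0) atTop atTop :=
    tendsto_atTop_add_const_right _ _ <| tendsto_atTop_add_const_right _ _ <|
      tendsto_natCast_atTop_atTop.atTop_mul_const (by linarith [hF.le_dist])
  filter_upwards [hlin.eventually_gt_atTop T] with a ha
  filter_upwards [eventually_ge_atTop (p * a)] with n hn
  have hat : a ≤ n / p := (Nat.le_div_iff_mul_le hp).2 (by linarith [mul_comm a p])
  linarith [hF.sub_le_gp_pow_smul_pow_smul hiso hyp hat, hclose n,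
    gp_le_gp_add_dist z0 (((f ^ p) ^ a) • z0) (((f ^ p) ^ (n / p)) • z0) ((f ^ n) • z0)]

lemma IsStraight.eventually_lt_dist (hiso : IsIsomAction Γ X) (hyp : HypWith δ X) {z0 : X}
    {f : Γ} {p : ℕ} (hp : 0 < p) (hF : IsStraight δ A z0 (f ^ p)) (T : ℝ) :
    ∀ᶠ a in atTop, T < dist (((f ^ p) ^ a) • z0) z0 :=
  (hF.eventually_lt_gp hiso hyp hp T).mono fun _ ha =>
    let ⟨_, hn⟩ := ha.exists
    hn.trans_le (gp_le_dist_left _ _ _)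

lemma eventually_gp_pow_pow_le (hiso : IsIsomAction Γ X) (hyp : HypWith δ X) {z0 : X}
    {f h : Γ} {p q : ℕ} (hp : 0 < p) (hq : 0 < q) (hF : IsStraight δ A z0 (f ^ p))
    (hH : IsStraight δ A z0 (h ^ q)) (hfreq : ∃ᶠ n in atTop, gp z0 ((f ^ n) • z0) ((h ^ n) • z0) ≤ M) :
    ∀ᶠ N in atTop, gp z0 (((f ^ p) ^ N) • z0) (((h ^ q) ^ N) • z0) ≤ M + 2 * δ := by
  filter_upwards [hF.eventually_lt_gp hiso hyp hp (M + 2 * δ),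
    hH.eventually_lt_gp hiso hyp hq (M + 2 * δ)] with N hfN hhN
  exact hyp.gp_le_of_frequently hfreq hfN hhN

lemma IsLoxodromic.exists_isStraight_pow (hiso : IsIsomAction Γ X) {z0 : X} {f : Γ}
    (hf : IsLoxodromic X f) (hfreq : ∃ᶠ n in atTop, gp z0 ((f ^ n) • z0) ((f⁻¹ ^ n) • z0) ≤ A) :
    ∃ p, 0 < p ∧ IsStraight δ A z0 (f ^ p) := by
  obtain ⟨p, ⟨hp, hfar⟩, hgp⟩ := ((eventually_gt_atTop 0).and
    ((hf.tendsto_dist_pow_smul hiso z0).eventually_ge_atTop (2 * A + 3 * δ + 1))).and_frequently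
      hfreq |>.exists
  exact ⟨p, hp, by rwa [← inv_pow, gp_comm], hfar⟩

lemma exists_frequently_le_of_not_tendsto {u : ℕ → ℝ} (h : ¬Tendsto u atTop atTop) :
    ∃ M, ∃ᶠ n in atTop, u n ≤ M := by
  simp only [tendsto_atTop, not_forall, Filter.not_eventually, not_le] at h
  obtain ⟨M, hM⟩ := h
  exact ⟨M, hM.mono fun _ => le_of_lt⟩

lemma exists_forall_frequently_le {ι : Type*} [Finite ι] {u : ι → ℕ → ℝ}
    (h : ∀ i, ¬Tendsto (u i) atTop atTop) : ∃ M, ∀ i, ∃ᶠ n in atTop, u i n ≤ M := by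
  choose M hM using fun i => exists_frequently_le_of_not_tendsto (h i)
  obtain ⟨M₀, hM₀⟩ := (Set.finite_range M).bddAbove
  exact ⟨M₀, fun i => (hM i).mono fun n hn => hn.trans (hM₀ ⟨i, rfl⟩)⟩

lemma raySeq_eq (z0 : X) (g : Γ) (s : Bool) :
    raySeq z0 g s = fun n => ((if s then g else g⁻¹) ^ n) • z0 := by
  funext n
  cases s <;> simp [raySeq, zpow_neg, inv_pow]

end Directions

section PingPong

variable {X : Type*} [MetricSpace X] {Γ : Type*} [Group Γ] [MulAction Γ X] {δ W : ℝ}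

structure IsPingPongSet (δ W : ℝ) (z0 : X) (S : Set Γ) : Prop where
  gp_inv_le : ∀ u ∈ S, ∀ t ∈ S, gp z0 (u⁻¹ • z0) (t • z0) ≤ W
  exists_gp_le : ∀ y, ∃ u ∈ S, gp z0 y (u • z0) ≤ W
  exists_gp_inv_le : ∀ y, ∃ t ∈ S, gp z0 y (t⁻¹ • z0) ≤ W
  le_dist : ∀ u ∈ S, 3 * W + 5 * δ + 1 ≤ dist (u • z0) z0

/-- Every `g` has a ping-pong partner `u * t`: choose `u` so that `u • z0` points away from
`g⁻¹ • z0` and `t` so that `t⁻¹ • z0` points away from `g • z0`. -/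
lemma IsPingPongSet.exists_mul (hiso : IsIsomAction Γ X) (hyp : HypWith δ X) {z0 : X}
    {S : Set Γ} (hS : IsPingPongSet δ W z0 S) (g : Γ) :
    ∃ u ∈ S, ∃ t ∈ S, gp z0 (g⁻¹ • z0) ((u * t) • z0) ≤ W + δ ∧
      gp z0 ((u * t)⁻¹ • z0) (g • z0) ≤ W + δ ∧
      2 * (W + δ) + 3 * δ + 1 ≤ dist ((u * t) • z0) z0 := by
  have hδ := hyp.nonneg z0
  obtain ⟨u, hu, hgu⟩ := hS.exists_gp_le (g⁻¹ • z0)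
  obtain ⟨t, ht, hgt⟩ := hS.exists_gp_inv_le (g • z0)
  have hW : 0 ≤ W := (gp_nonneg _ _ _).trans hgu
  have hhead : dist (u • z0) z0 - W ≤ gp z0 ((u * t) • z0) (u • z0) := by
    linarith [dist_sub_le_gp_mul_smul hiso z0 u t, hS.gp_inv_le u hu t ht]
  have htail : dist (t • z0) z0 - W ≤ gp z0 ((u * t)⁻¹ • z0) (t⁻¹ • z0) := by
    have := dist_sub_le_gp_mul_smul hiso z0 t⁻¹ u⁻¹
    rw [inv_inv, dist_inv_smul hiso, gp_comm z0 (t • z0), ← mul_inv_rev] at this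
    linarith [hS.gp_inv_le u hu t ht]
  have hu_far := hS.le_dist u hu
  have ht_far := hS.le_dist t ht
  refine ⟨u, hu, t, ht, ?_, ?_, ?_⟩
  · rw [gp_comm]
    exact hyp.gp_le_of_lt_gp (by rwa [gp_comm]) (by linarith)
  · exact hyp.gp_le_of_lt_gp (by rwa [gp_comm]) (by linarith)
  · linarith [gp_le_dist_left z0 ((u * t) • z0) (u • z0)]

lemma isPingPongSet_pair (hyp : HypWith δ X) {z0 : X} {u₁ u₂ : Γ}
    (hinv : ∀ u ∈ ({u₁, u₂} : Set Γ), ∀ t ∈ ({u₁, u₂} : Set Γ), gp z0 (u⁻¹ • z0) (t • z0) ≤ W)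
    (hheads : gp z0 (u₁ • z0) (u₂ • z0) ≤ W) (htails : gp z0 (u₁⁻¹ • z0) (u₂⁻¹ • z0) ≤ W)
    (hfar : ∀ u ∈ ({u₁, u₂} : Set Γ), 3 * (W + δ) + 5 * δ + 1 ≤ dist (u • z0) z0) :
    IsPingPongSet δ (W + δ) z0 {u₁, u₂} where
  gp_inv_le u hu t ht := (hinv u hu t ht).trans (le_add_of_nonneg_right (hyp.nonneg z0))
  exists_gp_le y := (hyp.gp_le_or_gp_le hheads y).elim (⟨u₁, by simp, ·⟩) (⟨u₂, by simp, ·⟩)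
  exists_gp_inv_le y := (hyp.gp_le_or_gp_le htails y).elim (⟨u₁, by simp, ·⟩) (⟨u₂, by simp, ·⟩)
  le_dist := hfar

end PingPong

section Selection

variable {X : Type*} [MetricSpace X] {Γ : Type*} [Group Γ] [MulAction Γ X] {δ : ℝ}

lemma IndepLox.exists_isPingPongSet (hiso : IsIsomAction Γ X) (hyp : HypWith δ X) {z0 : X}
    {f h : Γ} (hfh : IndepLox z0 f h) :
    ∃ W, ∃ p q N : ℕ, IsPingPongSet δ W z0 {(f ^ p) ^ N, (h ^ q) ^ N} := by
  obtain ⟨hf, hh, hff, hhh, hcross⟩ := hfh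
  simp only [raySeq_eq, Bool.false_eq_true, if_true, if_false] at hff hhh hcross
  obtain ⟨Mf, hMf⟩ := exists_frequently_le_of_not_tendsto hff
  obtain ⟨Mh, hMh⟩ := exists_frequently_le_of_not_tendsto hhh
  obtain ⟨Mc, hMc⟩ := exists_forall_frequently_le (ι := Bool × Bool) fun i => hcross i.1 i.2
  set A := max (max Mf Mh) Mc
  have hA : Mf ≤ A ∧ Mh ≤ A ∧ Mc ≤ A := ⟨by simp [A], by simp [A], by simp [A]⟩
  obtain ⟨p, hp, hF⟩ := hf.exists_isStraight_pow (δ := δ) hiso (hMf.mono fun _ hn => hn.trans hA.1)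
  obtain ⟨q, hq, hH⟩ := hh.exists_isStraight_pow (δ := δ) hiso (hMh.mono fun _ hn => hn.trans hA.2.1)
  have hFi : IsStraight δ A z0 (f⁻¹ ^ p) := inv_pow f p ▸ hF.inv hiso
  have hHi : IsStraight δ A z0 (h⁻¹ ^ q) := inv_pow h q ▸ hH.inv hiso
  set W := A + 2 * δ
  have hcrossN : ∀ i : Bool × Bool, ∀ᶠ N in atTop,
      gp z0 ((((if i.1 then f else f⁻¹) ^ p) ^ N) • z0) ((((if i.2 then h else h⁻¹) ^ q) ^ N) • z0)
        ≤ W := fun ⟨s, t⟩ =>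
    eventually_gp_pow_pow_le hiso hyp hp hq (by cases s; exacts [hFi, hF])
      (by cases t; exacts [hHi, hH]) ((hMc (s, t)).mono fun _ hn => hn.trans hA.2.2)
  obtain ⟨N, hN, hFfar, hHfar⟩ := ((eventually_all.2 hcrossN).and
    ((hF.eventually_lt_dist hiso hyp hp (3 * (W + δ) + 5 * δ + 1)).and
      (hH.eventually_lt_dist hiso hyp hq (3 * (W + δ) + 5 * δ + 1)))).exists
  have hpp := hN (true, true)
  have hpm := hN (true, false)
  have hmp := hN (false, true)
  have hmm := hN (false, false)
  simp only [Bool.false_eq_true, if_true, if_false, inv_pow] at hpp hpm hmp hmm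
  refine ⟨W + δ, p, q, N, isPingPongSet_pair hyp ?_ hpp hmm ?_⟩
  · rintro u (rfl | rfl) t (rfl | rfl)
    · simpa using hF.gp_inv_pow_smul_pow_smul_le hiso hyp N N
    · exact hmp
    · rw [gp_comm]; exact hpm
    · simpa using hH.gp_inv_pow_smul_pow_smul_le hiso hyp N N
  · rintro u (rfl | rfl)
    exacts [hFfar.le, hHfar.le]

lemma exists_mem_pow_of_mem_closure {B : Set Γ} {x : Γ} (hx : x ∈ Subsemigroup.closure B) :
    ∃ n, x ∈ B ^ n := by
  induction hx using Subsemigroup.closure_induction with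
  | mem y hy => exact ⟨1, by rwa [pow_one]⟩
  | mul _ _ _ _ hx hy =>
    obtain ⟨m, hm⟩ := hx
    obtain ⟨n, hn⟩ := hy
    exact ⟨m + n, pow_add B m n ▸ Set.mul_mem_mul hm hn⟩

lemma NonElementarySet.nonempty {z0 : X} {B : Set Γ} (hB : NonElementarySet z0 B) : B.Nonempty := by
  obtain ⟨f, -, hf, -⟩ := hB
  induction hf using Subsemigroup.closure_induction with
  | mem y hy => exact ⟨y, hy⟩
  | mul _ _ _ _ h _ => exact h

lemma NonElementarySet.exists_pingPong_partner (hiso : IsIsomAction Γ X) (hyp : HypWith δ X)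
    {z0 : X} {B : Set Γ} (hB : NonElementarySet z0 B) :
    ∃ C, ∀ g : Γ, ∃ m, ∃ s ∈ B ^ m, gp z0 (g⁻¹ • z0) (s • z0) ≤ C ∧
      gp z0 (s⁻¹ • z0) (g • z0) ≤ C ∧ 2 * C + 3 * δ + 1 ≤ dist (s • z0) z0 := by
  obtain ⟨f, h, hfB, hhB, hfh⟩ := hB
  obtain ⟨W, p, q, N, hS⟩ := hfh.exists_isPingPongSet hiso hyp
  have hpow : ∀ u ∈ ({(f ^ p) ^ N, (h ^ q) ^ N} : Set Γ), ∃ m, u ∈ B ^ m := by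
    rintro u (rfl | rfl)
    · obtain ⟨k, hk⟩ := exists_mem_pow_of_mem_closure hfB
      exact ⟨k * p * N, by rw [pow_mul, pow_mul]; exact Set.pow_mem_pow (Set.pow_mem_pow hk)⟩
    · obtain ⟨k, hk⟩ := exists_mem_pow_of_mem_closure hhB
      exact ⟨k * q * N, by rw [pow_mul, pow_mul]; exact Set.pow_mem_pow (Set.pow_mem_pow hk)⟩
  refine ⟨W + δ, fun g => ?_⟩
  obtain ⟨u, hu, t, ht, hgs, hsg, hfar⟩ := hS.exists_mul hiso hyp g
  obtain ⟨a, ha⟩ := hpow u hu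
  obtain ⟨b, hb⟩ := hpow t ht
  exact ⟨a + b, u * t, pow_add B a b ▸ Set.mul_mem_mul ha hb, hgs, hsg, hfar⟩

/-- In the arithmetic case every element of `B ^ n` has stable length `n λ`. Writing
`|x| = d(x • z0, z0)`, a ping-pong partner `s ∈ B ^ m` of `g ∈ B ^ n` gives
`|g| + |s| - 4 (C + δ) ≤ ℓ(g s) = (n + m) λ ≤ n λ + |s|`. -/
lemma exists_dist_le_of_not_nonArithmetic (hiso : IsIsomAction Γ X) (hyp : HypWith δ X)
    {z0 : X} {B : Set Γ} (hB : NonElementarySet z0 B) (hari : ¬NonArithmetic z0 B) :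
    ∃ lam C : ℝ, ∀ n : ℕ, ∀ g ∈ B ^ n,
      n * lam ≤ dist (g • z0) z0 ∧ dist (g • z0) z0 ≤ n * lam + C := by
  obtain ⟨b, hb⟩ := hB.nonempty
  have hℓ : ∀ n : ℕ, ∀ g ∈ B ^ n, stableLength z0 g = n * stableLength z0 b := fun n g hg => by
    by_contra hne
    exact hari ⟨n, g, b ^ n, hg, Set.pow_mem_pow hb, by rwa [stableLength_pow hiso]⟩
  have hlam := stableLength_nonneg z0 b
  have hδ := hyp.nonneg z0
  obtain ⟨C, hC⟩ := hB.exists_pingPong_partner hiso hyp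
  have hC0 : 0 ≤ C := let ⟨_, _, _, h, _⟩ := hC 1; (gp_nonneg _ _ _).trans h
  refine ⟨stableLength z0 b, 4 * C + 4 * δ + 1, fun n g hg =>
    ⟨hℓ n g hg ▸ stableLength_le_dist z0 g, ?_⟩⟩
  rcases lt_or_ge (dist (g • z0) z0) (2 * C + 3 * δ + 1) with hsmall | hbig
  · nlinarith [Nat.cast_nonneg (α := ℝ) n]
  obtain ⟨m, s, hs, hgs, hsg, hfar⟩ := hC g
  have hpp := add_sub_le_stableLength_mul hiso hyp z0 hgs hsg hbig hfar
  rw [hℓ (n + m) (g * s) (pow_add B n m ▸ Set.mul_mem_mul hg hs)] at hpp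
  have := hℓ m s hs ▸ stableLength_le_dist z0 s
  push_cast at hpp
  linarith

end Selection

section Displacement

open ENNReal

lemma exists_tendsto_div_of_subadditive {u : ℕ → ℝ≥0∞} (hsub : ∀ m n, u (m + n) ≤ u m + u n)
    (hu : ∀ n, u n ≠ ⊤) : ∃ L, Tendsto (fun n : ℕ => u n / n) atTop (𝓝 L) := by
  have hreal : Subadditive fun n => (u n).toReal := fun m n => by
    rw [← toReal_add (hu m) (hu n)]
    exact toReal_mono (add_ne_top.2 ⟨hu m, hu n⟩) (hsub m n)
  refine ⟨ENNReal.ofReal hreal.lim,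
    (ENNReal.tendsto_ofReal (hreal.tendsto_lim ⟨0, ?_⟩)).congr' ?_⟩
  · rintro _ ⟨n, rfl⟩; positivity
  · filter_upwards [eventually_gt_atTop 0] with n hn
    rw [ofReal_div_of_pos (by exact_mod_cast hn), ofReal_toReal (hu n), ofReal_natCast]

lemma tendsto_div_of_ofReal_le_of_le_ofReal {u : ℕ → ℝ≥0∞} {lam C : ℝ}
    (hlow : ∀ n : ℕ, ENNReal.ofReal (n * lam) ≤ u n)
    (hup : ∀ n : ℕ, u n ≤ ENNReal.ofReal (n * lam + C)) :
    Tendsto (fun n : ℕ => u n / n) atTop (𝓝 (ENNReal.ofReal lam)) := by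
  have hlim : Tendsto (fun n : ℕ => ENNReal.ofReal (lam + C / n)) atTop (𝓝 (ENNReal.ofReal lam)) := by
    simpa using ENNReal.tendsto_ofReal
      (tendsto_const_nhds.add (tendsto_const_div_atTop_nhds_zero_nat C))
  refine tendsto_of_tendsto_of_tendsto_of_le_of_le' tendsto_const_nhds hlim ?_ ?_ <;>
    filter_upwards [eventually_gt_atTop 0] with n hn <;>
    have hn' : (0 : ℝ) < n := by exact_mod_cast hn
  · calc ENNReal.ofReal lam = ENNReal.ofReal (n * lam) / n := by
          rw [← ofReal_natCast, ← ofReal_div_of_pos hn', mul_div_cancel_left₀ _ hn'.ne']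
      _ ≤ u n / n := by gcongr; exact hlow n
  · calc u n / n ≤ ENNReal.ofReal (n * lam + C) / n := by gcongr; exact hup n
      _ = ENNReal.ofReal (lam + C / n) := by
          rw [← ofReal_natCast, ← ofReal_div_of_pos hn', add_div, mul_div_cancel_left₀ _ hn'.ne']

variable {X : Type*} [MetricSpace X] {Γ : Type*} [Group Γ] [MulAction Γ X]
  {z0 : X} {B : Set Γ}

lemma ofReal_dist_le_dispSup {n : ℕ} {g : Γ} (hg : g ∈ B ^ n) :
    ENNReal.ofReal (dist (g • z0) z0) ≤ dispSup z0 B n :=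
  le_iSup₂ (f := fun g (_ : g ∈ B ^ n) => ENNReal.ofReal (dist (g • z0) z0)) g hg

lemma dispInf_le_ofReal_dist {n : ℕ} {g : Γ} (hg : g ∈ B ^ n) :
    dispInf z0 B n ≤ ENNReal.ofReal (dist (g • z0) z0) :=
  iInf₂_le (f := fun g (_ : g ∈ B ^ n) => ENNReal.ofReal (dist (g • z0) z0)) g hg

lemma ofReal_dist_mul_smul_le (hiso : IsIsomAction Γ X) (g h : Γ) :
    ENNReal.ofReal (dist ((g * h) • z0) z0) ≤
      ENNReal.ofReal (dist (g • z0) z0) + ENNReal.ofReal (dist (h • z0) z0) := by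
  rw [← ofReal_add dist_nonneg dist_nonneg]
  exact ofReal_le_ofReal (dist_mul_smul_le hiso g h z0)

lemma dispSup_add_le (hiso : IsIsomAction Γ X) (m n : ℕ) :
    dispSup z0 B (m + n) ≤ dispSup z0 B m + dispSup z0 B n := by
  refine iSup₂_le fun g hg => ?_
  rw [pow_add] at hg
  obtain ⟨g₁, hg₁, g₂, hg₂, rfl⟩ := hg
  exact (ofReal_dist_mul_smul_le hiso g₁ g₂).trans
    (add_le_add (ofReal_dist_le_dispSup hg₁) (ofReal_dist_le_dispSup hg₂))

lemma dispInf_add_le (hiso : IsIsomAction Γ X) (m n : ℕ) :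
    dispInf z0 B (m + n) ≤ dispInf z0 B m + dispInf z0 B n :=
  le_iInf₂_add_iInf₂ fun g₁ hg₁ g₂ hg₂ =>
    (dispInf_le_ofReal_dist (pow_add B m n ▸ Set.mul_mem_mul hg₁ hg₂)).trans
      (ofReal_dist_mul_smul_le hiso g₁ g₂)

lemma dispSup_le_mul (hiso : IsIsomAction Γ X) (n : ℕ) :
    dispSup z0 B n ≤ n * dispSup z0 B 1 := by
  induction n with
  | zero => simp [dispSup]
  | succ n ih =>
    calc dispSup z0 B (n + 1) ≤ dispSup z0 B n + dispSup z0 B 1 := dispSup_add_le hiso n 1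
      _ ≤ (n + 1 : ℕ) * dispSup z0 B 1 := by push_cast; rw [add_mul, one_mul]; gcongr

/-- `B ^ (n + 1)` contains the translate `b ^ n * B` of `B`. -/
lemma dispSup_eq_top (hiso : IsIsomAction Γ X) (hB : B.Nonempty) (htop : dispSup z0 B 1 = ⊤)
    (n : ℕ) : dispSup z0 B (n + 1) = ⊤ := by
  obtain ⟨b, hb⟩ := hB
  have : dispSup z0 B 1 ≤ dispSup z0 B (n + 1) + ENNReal.ofReal (dist ((b ^ n) • z0) z0) := by
    refine iSup₂_le fun g hg => ?_
    have hmem : b ^ n * g ∈ B ^ (n + 1) := pow_succ B n ▸ Set.mul_mem_mul (Set.pow_mem_pow hb) (pow_one B ▸ hg)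
    have hdist : dist (g • z0) z0 ≤ dist ((b ^ n * g) • z0) z0 + dist ((b ^ n) • z0) z0 := by
      rw [← hiso (b ^ n), ← mul_smul]
      exact dist_triangle_right _ _ _
    calc ENNReal.ofReal (dist (g • z0) z0)
        ≤ ENNReal.ofReal (dist ((b ^ n * g) • z0) z0) + ENNReal.ofReal (dist ((b ^ n) • z0) z0) := by
          rw [← ofReal_add dist_nonneg dist_nonneg]; exact ofReal_le_ofReal hdist
      _ ≤ _ := by gcongr; exact ofReal_dist_le_dispSup hmem
  rw [htop, top_le_iff, add_eq_top] at this
  exact this.resolve_right ofReal_ne_top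

lemma exists_tendsto_dispSup_div (hiso : IsIsomAction Γ X) (hB : B.Nonempty) :
    ∃ L, Tendsto (fun n : ℕ => dispSup z0 B n / n) atTop (𝓝 L) := by
  by_cases htop : dispSup z0 B 1 = ⊤
  · refine ⟨⊤, tendsto_const_nhds.congr' ?_⟩
    filter_upwards [eventually_gt_atTop 0] with n hn
    obtain ⟨m, rfl⟩ := Nat.exists_eq_add_of_lt hn
    rw [zero_add, dispSup_eq_top hiso hB htop, top_div_of_ne_top (natCast_ne_top _)]
  · exact exists_tendsto_div_of_subadditive (dispSup_add_le hiso) fun n =>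
      ne_top_of_le_ne_top (mul_ne_top (natCast_ne_top n) htop) (dispSup_le_mul hiso n)

lemma exists_tendsto_dispInf_div (hiso : IsIsomAction Γ X) (hB : B.Nonempty) :
    ∃ L, Tendsto (fun n : ℕ => dispInf z0 B n / n) atTop (𝓝 L) :=
  exists_tendsto_div_of_subadditive (dispInf_add_le hiso) fun n =>
    let ⟨_, hg⟩ := hB.pow (n := n)
    ne_top_of_le_ne_top ofReal_ne_top (dispInf_le_ofReal_dist hg)

lemma tendsto_ofReal_dist_pow_div (hiso : IsIsomAction Γ X) (g : Γ) {m : ℕ} (hm : 0 < m) :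
    Tendsto (fun k : ℕ => ENNReal.ofReal (dist ((g ^ k) • z0) z0) / ((m * k : ℕ) : ℝ≥0∞)) atTop
      (𝓝 (ENNReal.ofReal (stableLength z0 g / m))) := by
  refine (ENNReal.tendsto_ofReal ((tendsto_stableLength hiso z0 g).div_const m)).congr' ?_
  filter_upwards [eventually_gt_atTop 0] with k hk
  rw [div_div, ofReal_div_of_pos (by positivity), ← Nat.cast_mul, ofReal_natCast, mul_comm k]

variable {L LSub : ℝ≥0∞}

lemma ofReal_stableLength_div_le (hiso : IsIsomAction Γ X)
    (hL : Tendsto (fun n : ℕ => dispSup z0 B n / n) atTop (𝓝 L))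
    {m : ℕ} (hm : 0 < m) {g : Γ} (hg : g ∈ B ^ m) :
    ENNReal.ofReal (stableLength z0 g / m) ≤ L :=
  le_of_tendsto_of_tendsto' (tendsto_ofReal_dist_pow_div hiso g hm)
    (hL.comp (tendsto_id.const_mul_atTop' hm)) fun k =>
      ENNReal.div_le_div_right (ofReal_dist_le_dispSup (pow_mul B m k ▸ Set.pow_mem_pow hg)) _

lemma le_ofReal_stableLength_div (hiso : IsIsomAction Γ X)
    (hLSub : Tendsto (fun n : ℕ => dispInf z0 B n / n) atTop (𝓝 LSub))
    {m : ℕ} (hm : 0 < m) {g : Γ} (hg : g ∈ B ^ m) :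
    LSub ≤ ENNReal.ofReal (stableLength z0 g / m) :=
  le_of_tendsto_of_tendsto' (hLSub.comp (tendsto_id.const_mul_atTop' hm))
    (tendsto_ofReal_dist_pow_div hiso g hm) fun k =>
      ENNReal.div_le_div_right (dispInf_le_ofReal_dist (pow_mul B m k ▸ Set.pow_mem_pow hg)) _

lemma lt_of_nonArithmetic (hiso : IsIsomAction Γ X)
    (hL : Tendsto (fun n : ℕ => dispSup z0 B n / n) atTop (𝓝 L))
    (hLSub : Tendsto (fun n : ℕ => dispInf z0 B n / n) atTop (𝓝 LSub))
    (hB : NonArithmetic z0 B) : LSub < L := by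
  obtain ⟨m, g₁, g₂, hg₁, hg₂, hne⟩ := hB
  have hm : 0 < m := Nat.pos_of_ne_zero fun h => by
    subst h
    rw [pow_zero, Set.mem_one] at hg₁ hg₂
    exact hne (hg₁ ▸ hg₂ ▸ rfl)
  wlog hlt : stableLength z0 g₁ < stableLength z0 g₂ generalizing g₁ g₂
  · exact this g₂ g₁ hg₂ hg₁ hne.symm (hne.lt_or_gt.resolve_left hlt)
  have hm' : (0 : ℝ) < m := by exact_mod_cast hm
  calc LSub ≤ ENNReal.ofReal (stableLength z0 g₁ / m) := le_ofReal_stableLength_div hiso hLSub hm hg₁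
    _ < ENNReal.ofReal (stableLength z0 g₂ / m) :=
        (ofReal_lt_ofReal_iff (lt_of_le_of_lt (by positivity [stableLength_nonneg z0 g₁])
          (div_lt_div_of_pos_right hlt hm'))).2 (div_lt_div_of_pos_right hlt hm')
    _ ≤ L := ofReal_stableLength_div_le hiso hL hm hg₂

lemma eq_of_not_nonArithmetic {δ : ℝ} (hiso : IsIsomAction Γ X) (hyp : HypWith δ X)
    (hB : NonElementarySet z0 B)
    (hL : Tendsto (fun n : ℕ => dispSup z0 B n / n) atTop (𝓝 L))
    (hLSub : Tendsto (fun n : ℕ => dispInf z0 B n / n) atTop (𝓝 LSub))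
    (hari : ¬NonArithmetic z0 B) : LSub = L := by
  obtain ⟨lam, C, hlam⟩ := exists_dist_le_of_not_nonArithmetic hiso hyp hB hari
  have hlow : ∀ n : ℕ, ∀ g ∈ B ^ n, ENNReal.ofReal (n * lam) ≤ ENNReal.ofReal (dist (g • z0) z0) :=
    fun n g hg => ofReal_le_ofReal (hlam n g hg).1
  have hup : ∀ n : ℕ, ∀ g ∈ B ^ n, ENNReal.ofReal (dist (g • z0) z0) ≤ ENNReal.ofReal (n * lam + C) :=
    fun n g hg => ofReal_le_ofReal (hlam n g hg).2
  have hne : ∀ n : ℕ, (B ^ n).Nonempty := fun n => hB.nonempty.pow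
  have hInf : Tendsto (fun n : ℕ => dispInf z0 B n / n) atTop (𝓝 (ENNReal.ofReal lam)) :=
    tendsto_div_of_ofReal_le_of_le_ofReal (fun n => le_iInf₂ (hlow n)) fun n =>
      let ⟨g, hg⟩ := hne n
      (dispInf_le_ofReal_dist hg).trans (hup n g hg)
  have hSup : Tendsto (fun n : ℕ => dispSup z0 B n / n) atTop (𝓝 (ENNReal.ofReal lam)) :=
    tendsto_div_of_ofReal_le_of_le_ofReal (C := C) (fun n =>
      let ⟨g, hg⟩ := hne n
      (hlow n g hg).trans (ofReal_dist_le_dispSup hg)) fun n => iSup₂_le (hup n)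
  exact (tendsto_nhds_unique hLSub hInf).trans (tendsto_nhds_unique hL hSup).symm

end Displacement

theorem nonarithmetic_iff_displacements_differ_general
    {X : Type*} [MetricSpace X] {Γ : Type*} [Group Γ] [MulAction Γ X]
    (hiso : IsIsomAction Γ X) (hhyp : GromovHyperbolic X)
    (z0 : X) (B : Set Γ) (hne : NonElementarySet z0 B) :
    ∃ L LSub : ENNReal,
      Tendsto (fun n : ℕ => dispSup z0 B n / n) atTop (𝓝 L) ∧
      Tendsto (fun n : ℕ => dispInf z0 B n / n) atTop (𝓝 LSub) ∧
      (NonArithmetic z0 B ↔ LSub ≠ L) := by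
  obtain ⟨δ, -, hyp⟩ := hhyp
  obtain ⟨L, hL⟩ := exists_tendsto_dispSup_div hiso hne.nonempty
  obtain ⟨LSub, hLSub⟩ := exists_tendsto_dispInf_div hiso hne.nonempty
  refine ⟨L, LSub, hL, hLSub, fun hna => (lt_of_nonArithmetic hiso hL hLSub hna).ne, ?_⟩
  contrapose!
  exact eq_of_not_nonArithmetic hiso hyp hne hL hLSub

/-- **Proposition (characterization of non-arithmeticity).** A non-elementary subset `B`
of isometries of a geodesic Gromov-hyperbolic space is non-arithmetic if and only if
`ℓ_sub(B) ≠ ℓ(B)`. -/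
theorem nonarithmetic_iff_displacements_differ
    {X : Type*} [MetricSpace X] {Γ : Type*} [Group Γ] [MulAction Γ X]
    (hiso : IsIsomAction Γ X) (hgeo : GeodesicSpace X) (hhyp : GromovHyperbolic X)
    (z0 : X) (B : Set Γ) (hne : NonElementarySet z0 B) :
    ∃ L LSub : ENNReal,
      Tendsto (fun n : ℕ => dispSup z0 B n / n) atTop (𝓝 L) ∧
      Tendsto (fun n : ℕ => dispInf z0 B n / n) atTop (𝓝 LSub) ∧
      (NonArithmetic z0 B ↔ LSub ≠ L) :=
  nonarithmetic_iff_displacements_differ_general hiso hhyp z0 B hne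

end BMS
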